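/- arXiv:1805.06763 — 7 statements merged into one kernel-verified Lean document; each statement's English description precedes it below -/
import Mathlib

section
/- For any modal propositions A and B, if A ▶* B then A^□ ▶* B^□. -/
/-- Modal propositional formulas: atoms, ⊥, ∧, ∨, →, □. -/
inductive Form : Type
  | atom : ℕ → Form
  | bot  : Form
  | and  : Form → Form → Form
  | or   : Form → Form → Form
  | imp  : Form → Form → Form
  | box  : Form → Form
  deriving DecidableEq

namespace Form

/-- ⊤ := ⊥ → ⊥. -/
def top : Form := .imp .bot .bot

/-- Biimplication A ↔ B := (A → B) ∧ (B → A). -/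
def biimp (A B : Form) : Form := .and (.imp A B) (.imp B A)

/-- ⊡A := A ∧ □A. -/
def dotbox (A : Form) : Form := .and A (.box A)

/-- Axiom schemes of intuitionistic propositional logic (in the modal language;
no axioms for □, so boxed formulas behave as atoms). -/
inductive IpcAx : Form → Prop
  | k (A B : Form) : IpcAx (.imp A (.imp B A))
  | s (A B C : Form) : IpcAx (.imp (.imp A (.imp B C)) (.imp (.imp A B) (.imp A C)))
  | andI (A B : Form) : IpcAx (.imp A (.imp B (.and A B)))
  | andE₁ (A B : Form) : IpcAx (.imp (.and A B) A)
  | andE₂ (A B : Form) : IpcAx (.imp (.and A B) B)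
  | orI₁ (A B : Form) : IpcAx (.imp A (.or A B))
  | orI₂ (A B : Form) : IpcAx (.imp B (.or A B))
  | orE (A B C : Form) : IpcAx (.imp (.imp A C) (.imp (.imp B C) (.imp (.or A B) C)))
  | exfalso (A : Form) : IpcAx (.imp .bot A)

/-- Derivability from the axiom set `Ax` by modus ponens alone. -/
inductive DerivMP (Ax : Form → Prop) : Form → Prop
  | ax {A : Form} : Ax A → DerivMP Ax A
  | mp {A B : Form} : DerivMP Ax (.imp A B) → DerivMP Ax A → DerivMP Ax B

/-- Derivability from the axiom set `Ax` by modus ponens and necessitation. -/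
inductive Deriv (Ax : Form → Prop) : Form → Prop
  | ax {A : Form} : Ax A → Deriv Ax A
  | mp {A B : Form} : Deriv Ax (.imp A B) → Deriv Ax A → Deriv Ax B
  | nec {A : Form} : Deriv Ax A → Deriv Ax (.box A)

/-- The K axiom scheme □(A→B)→(□A→□B). -/
def KAx (F : Form) : Prop := ∃ A B : Form, F = .imp (.box (.imp A B)) (.imp (.box A) (.box B))
/-- The 4 axiom scheme □A→□□A. -/
def FourAx (F : Form) : Prop := ∃ A : Form, F = .imp (.box A) (.box (.box A))
/-- Löb's axiom scheme □(□A→A)→□A. -/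
def LobAx (F : Form) : Prop := ∃ A : Form, F = .imp (.box (.imp (.box A) A)) (.box A)
/-- The completeness principle scheme A→□A. -/
def CPAx (F : Form) : Prop := ∃ A : Form, F = .imp A (.box A)
/-- The completeness principle restricted to atoms: p→□p. -/
def CPaAx (F : Form) : Prop := ∃ n : ℕ, F = .imp (.atom n) (.box (.atom n))

/-- Axioms of iK4: IPC plus K plus 4. -/
def K4Ax (F : Form) : Prop := IpcAx F ∨ KAx F ∨ FourAx F
/-- Axioms of iGL: iK4 plus Löb. -/
def GLAx (F : Form) : Prop := K4Ax F ∨ LobAx F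

/-- IPC_□ provability (modus ponens only; no rules for □). -/
def IPCbox (A : Form) : Prop := DerivMP IpcAx A
/-- iK4 provability. -/
def IK4 (A : Form) : Prop := Deriv K4Ax A
/-- iGL provability. -/
def IGL (A : Form) : Prop := Deriv GLAx A
/-- iGLC := iGL + CP. -/
def IGLC (A : Form) : Prop := Deriv (fun F => GLAx F ∨ CPAx F) A

/-- The box translation A^□. -/
def boxT : Form → Form
  | .atom n => .and (.atom n) (.box (.atom n))
  | .bot => .bot
  | .and A B => .and (boxT A) (boxT B)
  | .or A B => .or (boxT A) (boxT B)
  | .imp A B => .and (.imp (boxT A) (boxT B)) (.box (.imp (boxT A) (boxT B)))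
  | .box A => .box (boxT A)

/-- `[A]B`: identity on atoms, ⊥ and boxed formulas, commutes with ∧ and ∨,
and `[A](B₁→B₂) = A→(B₁→B₂)`. -/
def bracket (A : Form) : Form → Form
  | .and B C => .and (bracket A B) (bracket A C)
  | .or B C => .or (bracket A B) (bracket A C)
  | .imp B C => .imp A (.imp B C)
  | B => B

/-- Conjunction of a finite list of formulas. -/
def conj (l : List Form) : Form := l.foldr .and top
/-- Disjunction of a finite list of formulas. -/
def disj (l : List Form) : Form := l.foldr .or .bot

/-- `[A]Z := ⋁{[A]E : E ∈ Z}`. -/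
def bracketList (A : Form) (Z : List Form) : Form := disj (Z.map (bracket A))

/-- A finite set of implications, given as the list of (antecedent, consequent) pairs. -/
def impsOf (X : List (Form × Form)) : List Form := X.map fun D => .imp D.1 D.2

def IsAtomOrBoxed (p : Form) : Prop := (∃ n : ℕ, p = .atom n) ∨ (∃ B : Form, p = .box B)

/-- The relation ▶* (with rule B2). -/
inductive PresS : Form → Form → Prop
  | a1 {A B : Form} : IK4 (.imp A B) → PresS A B
  | a2 {A B C : Form} : PresS A B → PresS B C → PresS A C
  | a3 {A B C : Form} : PresS C A → PresS C B → PresS C (.and A B)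
  | a4 {A B : Form} : PresS A B → PresS (.box A) (.box B)
  | b1 {A B C : Form} : PresS A C → PresS B C → PresS (.or A B) C
  | b2 (X : List (Form × Form)) (C : Form) :
      PresS (.and (.imp (conj (impsOf X)) C) (.box (conj (impsOf X))))
            (bracketList (conj (impsOf X)) (X.map Prod.fst ++ [C]))
  | b3 {p A B : Form} : IsAtomOrBoxed p → PresS A B → PresS (.imp p A) (.imp p B)

/-- The relation ▶ (with rule B2′ instead of B2). -/
inductive Pres : Form → Form → Prop
  | a1 {A B : Form} : IK4 (.imp A B) → Pres A B
  | a2 {A B C : Form} : Pres A B → Pres B C → Pres A C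
  | a3 {A B C : Form} : Pres C A → Pres C B → Pres C (.and A B)
  | a4 {A B : Form} : Pres A B → Pres (.box A) (.box B)
  | b1 {A B C : Form} : Pres A C → Pres B C → Pres (.or A B) C
  | b2 (X : List (Form × Form)) (C : Form) :
      Pres (.imp (conj (impsOf X)) C)
           (bracketList (conj (impsOf X)) (X.map Prod.fst ++ [C]))
  | b3 {p A B : Form} : IsAtomOrBoxed p → Pres A B → Pres (.imp p A) (.imp p B)

/-- iH*_σ := iGL + CP + {□A→□B : A ▶* B}. -/
def IHstarAx (F : Form) : Prop :=
  GLAx F ∨ CPAx F ∨ ∃ A B : Form, PresS A B ∧ F = .imp (.box A) (.box B)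
def IHstar (A : Form) : Prop := Deriv IHstarAx A

/-- NOI (as a Boolean predicate): every → occurs within the scope of some □. -/
def noi : Form → Bool
  | .atom _ => true
  | .bot => true
  | .and A B => noi A && noi B
  | .or A B => noi A && noi B
  | .imp _ _ => false
  | .box _ => true

/-- NOI: every occurrence of → lies within the scope of some □. -/
def NOI (A : Form) : Prop := noi A = true

/-- The Leivant translation A^l. -/
def leiv : Form → Form
  | .and A B => .and (leiv A) (leiv B)
  | .or A B => .or (dotbox (leiv A)) (dotbox (leiv B))
  | .imp A B => if noi A then .imp A (leiv B) else .imp A B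
  | A => A

/-- iH_σ := iGL + CP_a + Le⁺ + {□A→□B : A ▶ B}. -/
def IHsigmaAx (F : Form) : Prop :=
  GLAx F ∨ CPaAx F ∨ (∃ A : Form, F = .imp (.box A) (.box (leiv A)))
    ∨ ∃ A B : Form, Pres A B ∧ F = .imp (.box A) (.box B)
def IHsigma (A : Form) : Prop := Deriv IHsigmaAx A

/-- TNNIL: smallest class containing atoms and ⊥, closed under ∧, ∨, □, and
containing A→B whenever A, B ∈ TNNIL and A ∈ NOI. -/
inductive TNNIL : Form → Prop
  | atom (n : ℕ) : TNNIL (.atom n)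
  | bot : TNNIL .bot
  | and {A B : Form} : TNNIL A → TNNIL B → TNNIL (.and A B)
  | or {A B : Form} : TNNIL A → TNNIL B → TNNIL (.or A B)
  | box {A : Form} : TNNIL A → TNNIL (.box A)
  | imp {A B : Form} : NOI A → TNNIL A → TNNIL B → TNNIL (.imp A B)

/-- Substitution of formulas for atoms. -/
def subst (σ : ℕ → Form) : Form → Form
  | .atom n => σ n
  | .bot => .bot
  | .and A B => .and (subst σ A) (subst σ B)
  | .or A B => .or (subst σ A) (subst σ B)
  | .imp A B => .imp (subst σ A) (subst σ B)
  | .box A => .box (subst σ A)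

/-- Non-modal (□-free) formulas. -/
def BoxFree : Form → Prop
  | .atom _ => True
  | .bot => True
  | .and A B => BoxFree A ∧ BoxFree B
  | .or A B => BoxFree A ∧ BoxFree B
  | .imp A B => BoxFree A ∧ BoxFree B
  | .box _ => False

/-- TNNIL⁻: formulas of the form A(□B₁,…,□Bₙ) with A non-modal and each Bᵢ ∈ TNNIL. -/
def TNNILminus (F : Form) : Prop :=
  ∃ (A : Form) (σ : ℕ → Form), BoxFree A ∧
    (∀ n : ℕ, σ n = .atom n ∨ ∃ B : Form, TNNIL B ∧ σ n = .box B) ∧ F = subst σ A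

/-- The complexity measure ρ (with ρ(□A)=0). -/
def rho : Form → ℕ
  | .atom _ => 0
  | .bot => 0
  | .and A B => max (rho A) (rho B)
  | .or A B => max (rho A) (rho B)
  | .imp A B => max (rho A + 1) (rho B)
  | .box _ => 0

/-- Atoms occurring in a formula. -/
def atoms : Form → Finset ℕ
  | .atom n => {n}
  | .bot => ∅
  | .and A B => atoms A ∪ atoms B
  | .or A B => atoms A ∪ atoms B
  | .imp A B => atoms A ∪ atoms B
  | .box A => atoms A

/-- IPC provability for non-modal formulas (all axiom instances non-modal). -/
def IPC (A : Form) : Prop := DerivMP (fun F => IpcAx F ∧ BoxFree F) A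

/-- An effective encoding of formulas as lists of naturals. -/
def code : Form → List ℕ
  | .atom n => [0, n]
  | .bot => [1]
  | .and A B => 2 :: (code A ++ code B)
  | .or A B => 3 :: (code A ++ code B)
  | .imp A B => 4 :: (code A ++ code B)
  | .box A => 5 :: code A

/-- `B↓D := ⋀((X∖{D})∪{F})` for `D = (E→F) ∈ X`. -/
def bdown (X : List (Form × Form)) (D : Form × Form) : Form :=
  conj (impsOf (X.erase D) ++ [D.2])

/-- The axioms of iGL closed under boxing: if B is an axiom then so is □B. -/
inductive GLAxBox : Form → Prop
  | base {A : Form} : GLAx A → GLAxBox A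
  | box {A : Form} : GLAxBox A → GLAxBox (.box A)

end Form
namespace Form

/-- `tt X := X ∧ □X`. -/
abbrev tt (X : Form) : Form := .and X (.box X)

lemma ik4_ax {F : Form} (h : IpcAx F) : IK4 F := Deriv.ax (Or.inl h)
lemma ik4_K (A B : Form) : IK4 (.imp (.box (.imp A B)) (.imp (.box A) (.box B))) :=
  Deriv.ax (Or.inr (Or.inl ⟨A, B, rfl⟩))
lemma ik4_4 (A : Form) : IK4 (.imp (.box A) (.box (.box A))) :=
  Deriv.ax (Or.inr (Or.inr ⟨A, rfl⟩))

/-- Hilbert derivations from hypotheses `Γ` over iK4 theorems, by modus ponens. -/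
inductive HD (Γ : List Form) : Form → Prop
  | hyp {A : Form} : A ∈ Γ → HD Γ A
  | thm {A : Form} : IK4 A → HD Γ A
  | mp {A B : Form} : HD Γ (.imp A B) → HD Γ A → HD Γ B

namespace HD

lemma axK {Γ} (A B : Form) : HD Γ (.imp A (.imp B A)) := .thm (ik4_ax (.k A B))
lemma axS {Γ} (A B C : Form) :
    HD Γ (.imp (.imp A (.imp B C)) (.imp (.imp A B) (.imp A C))) := .thm (ik4_ax (.s A B C))

lemma idem {Γ} (A : Form) : HD Γ (.imp A A) :=
  ((axS A (.imp A A) A).mp (axK A (.imp A A))).mp (axK A A)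

lemma ded {Γ : List Form} {A B : Form} (h : HD (A :: Γ) B) : HD Γ (.imp A B) := by
  induction h with
  | hyp hm =>
    rcases List.mem_cons.mp hm with rfl | hm
    · exact idem _
    · exact (axK _ _).mp (.hyp hm)
  | thm ht => exact (axK _ _).mp (.thm ht)
  | mp _ _ ih1 ih2 => exact ((axS _ _ _).mp ih1).mp ih2

lemma pair {Γ} {X Y : Form} (h1 : HD Γ X) (h2 : HD Γ Y) : HD Γ (.and X Y) :=
  ((HD.thm (ik4_ax (.andI X Y))).mp h1).mp h2
lemma e1 {Γ} {X Y : Form} (h : HD Γ (.and X Y)) : HD Γ X :=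
  (HD.thm (ik4_ax (.andE₁ X Y))).mp h
lemma e2 {Γ} {X Y : Form} (h : HD Γ (.and X Y)) : HD Γ Y :=
  (HD.thm (ik4_ax (.andE₂ X Y))).mp h
lemma inl {Γ} {X : Form} (Y : Form) (h : HD Γ X) : HD Γ (.or X Y) :=
  (HD.thm (ik4_ax (.orI₁ X Y))).mp h
lemma inr {Γ} (X : Form) {Y : Form} (h : HD Γ Y) : HD Γ (.or X Y) :=
  (HD.thm (ik4_ax (.orI₂ X Y))).mp h
lemma orE' {Γ} {X Y Z : Form} (h : HD Γ (.or X Y)) (h1 : HD Γ (.imp X Z))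
    (h2 : HD Γ (.imp Y Z)) : HD Γ Z :=
  (((HD.thm (ik4_ax (.orE X Y Z))).mp h1).mp h2).mp h

lemma toIK4 {A : Form} (h : HD [] A) : IK4 A := by
  induction h with
  | hyp hm => simp at hm
  | thm ht => exact ht
  | mp _ _ ih1 ih2 => exact ih1.mp ih2

end HD

lemma ik4_id (A : Form) : IK4 (.imp A A) := HD.toIK4 (HD.idem A)

lemma boxMono {X Y : Form} (h : IK4 (.imp X Y)) : IK4 (.imp (.box X) (.box Y)) :=
  (ik4_K X Y).mp h.nec

lemma impTrans {X Y Z : Form} (h1 : IK4 (.imp X Y)) (h2 : IK4 (.imp Y Z)) :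
    IK4 (.imp X Z) := by
  apply HD.toIK4; apply HD.ded
  exact (HD.thm h2).mp ((HD.thm h1).mp (.hyp (by simp)))

lemma boxPair (X Y : Form) : IK4 (.imp (.box X) (.imp (.box Y) (.box (.and X Y)))) := by
  apply HD.toIK4; apply HD.ded; apply HD.ded
  have hx : HD [Form.box Y, Form.box X] (.box X) := .hyp (by simp)
  have hy : HD [Form.box Y, Form.box X] (.box Y) := .hyp (by simp)
  exact ((HD.thm (ik4_K Y (.and X Y))).mp ((HD.thm (boxMono (ik4_ax (.andI X Y)))).mp hx)).mp hy

/-- `tt X` is stable: `tt X → □(tt X)`. -/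
lemma tbox (X : Form) : IK4 (.imp (tt X) (.box (tt X))) := by
  apply HD.toIK4; apply HD.ded
  have h : HD [tt X] (tt X) := .hyp (by simp)
  have hb : HD [tt X] (.box X) := h.e2
  have hbb : HD [tt X] (.box (.box X)) := (HD.thm (ik4_4 X)).mp hb
  exact ((HD.thm (boxPair X (.box X))).mp hb).mp hbb

lemma stabAnd {P Q : Form} (hp : IK4 (.imp P (.box P))) (hq : IK4 (.imp Q (.box Q))) :
    IK4 (.imp (.and P Q) (.box (.and P Q))) := by
  apply HD.toIK4; apply HD.ded
  have h : HD [Form.and P Q] (.and P Q) := .hyp (by simp)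
  exact ((HD.thm (boxPair P Q)).mp ((HD.thm hp).mp h.e1)).mp ((HD.thm hq).mp h.e2)

lemma stabOr {P Q : Form} (hp : IK4 (.imp P (.box P))) (hq : IK4 (.imp Q (.box Q))) :
    IK4 (.imp (.or P Q) (.box (.or P Q))) := by
  apply HD.toIK4; apply HD.ded
  have h : HD [Form.or P Q] (.or P Q) := .hyp (by simp)
  refine h.orE' ?_ ?_
  · apply HD.ded
    exact (HD.thm (boxMono (ik4_ax (.orI₁ P Q)))).mp ((HD.thm hp).mp (.hyp (by simp)))
  · apply HD.ded
    exact (HD.thm (boxMono (ik4_ax (.orI₂ P Q)))).mp ((HD.thm hq).mp (.hyp (by simp)))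

lemma one_step {P Q : Form} (hs : IK4 (.imp P (.box P))) (h : IK4 (.imp P Q)) :
    IK4 (.imp P (tt Q)) := by
  apply HD.toIK4; apply HD.ded
  have hp : HD [P] P := .hyp (by simp)
  exact HD.pair ((HD.thm h).mp hp) ((HD.thm (boxMono h)).mp ((HD.thm hs).mp hp))

lemma curry (X Y Z : Form) : IK4 (.imp (.imp (.and X Y) Z) (.imp X (.imp Y Z))) := by
  apply HD.toIK4; apply HD.ded; apply HD.ded; apply HD.ded
  have h : HD [Y, X, Form.imp (.and X Y) Z] (.imp (.and X Y) Z) := .hyp (by simp)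
  exact h.mp (HD.pair (.hyp (by simp)) (.hyp (by simp)))

lemma uncurry (X Y Z : Form) : IK4 (.imp (.imp X (.imp Y Z)) (.imp (.and X Y) Z)) := by
  apply HD.toIK4; apply HD.ded; apply HD.ded
  have h : HD [Form.and X Y, Form.imp X (.imp Y Z)] (.imp X (.imp Y Z)) := .hyp (by simp)
  have hp : HD [Form.and X Y, Form.imp X (.imp Y Z)] (.and X Y) := .hyp (by simp)
  exact (h.mp hp.e1).mp hp.e2

lemma two_step {J1 J2 J3 : Form} (core : IK4 (.imp (.and (tt J1) (tt J2)) J3)) :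
    IK4 (.imp (tt J1) (tt (.imp (tt J2) (tt J3)))) := by
  have v1 : IK4 (.imp (.and (tt J1) (tt J2)) (tt J3)) :=
    one_step (stabAnd (tbox J1) (tbox J2)) core
  have v2 : IK4 (.imp (tt J1) (.imp (tt J2) (tt J3))) := (curry _ _ _).mp v1
  exact one_step (tbox J1) v2

lemma impAnd {X X' Y Y' : Form} (h1 : IK4 (.imp X X')) (h2 : IK4 (.imp Y Y')) :
    IK4 (.imp (.and X Y) (.and X' Y')) := by
  apply HD.toIK4; apply HD.ded
  have h : HD [Form.and X Y] (.and X Y) := .hyp (by simp)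
  exact HD.pair ((HD.thm h1).mp h.e1) ((HD.thm h2).mp h.e2)

lemma impOr {X X' Y Y' : Form} (h1 : IK4 (.imp X X')) (h2 : IK4 (.imp Y Y')) :
    IK4 (.imp (.or X Y) (.or X' Y')) := by
  apply HD.toIK4; apply HD.ded
  have h : HD [Form.or X Y] (.or X Y) := .hyp (by simp)
  refine h.orE' ?_ ?_
  · exact HD.ded (HD.inl _ ((HD.thm h1).mp (.hyp (by simp))))
  · exact HD.ded (HD.inr _ ((HD.thm h2).mp (.hyp (by simp))))

lemma mk_t {U : Form} (h : IK4 U) : IK4 (tt U) :=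
  ((ik4_ax (.andI U (.box U))).mp h).mp h.nec

/-- The box translation is stable: `A^□ → □(A^□)` in iK4. -/
lemma selfbox : ∀ A : Form, IK4 (.imp (boxT A) (.box (boxT A)))
  | .atom n => tbox (.atom n)
  | .bot => ik4_ax (.exfalso _)
  | .and A B => stabAnd (selfbox A) (selfbox B)
  | .or A B => stabOr (selfbox A) (selfbox B)
  | .imp A B => tbox _
  | .box A => ik4_4 _

lemma core_s (A' B' C' : Form) :
    IK4 (.imp (.and (tt (.imp A' (tt (.imp B' C')))) (tt (.imp A' B'))) (.imp A' C')) := by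
  apply HD.toIK4; apply HD.ded; apply HD.ded
  have h : HD [A', .and (tt (.imp A' (tt (.imp B' C')))) (tt (.imp A' B'))]
      (.and (tt (.imp A' (tt (.imp B' C')))) (tt (.imp A' B'))) := .hyp (by simp)
  have ha : HD [A', .and (tt (.imp A' (tt (.imp B' C')))) (tt (.imp A' B'))] A' := .hyp (by simp)
  exact ((h.e1.e1.mp ha).e1).mp (h.e2.e1.mp ha)

lemma core_orE (A' B' C' : Form) :
    IK4 (.imp (.and (tt (.imp A' C')) (tt (.imp B' C'))) (.imp (.or A' B') C')) := by
  apply HD.toIK4; apply HD.ded; apply HD.ded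
  have h : HD [Form.or A' B', .and (tt (.imp A' C')) (tt (.imp B' C'))]
      (.and (tt (.imp A' C')) (tt (.imp B' C'))) := .hyp (by simp)
  have hd : HD [Form.or A' B', .and (tt (.imp A' C')) (tt (.imp B' C'))] (.or A' B') :=
    .hyp (by simp)
  exact hd.orE' h.e1.e1 h.e2.e1

/-- iK4 proves the box translation of each of its theorems. -/
lemma boxT_pres {F : Form} (h : IK4 F) : IK4 (boxT F) := by
  induction h with
  | mp _ _ ih1 ih2 =>
    exact ((ik4_ax (.andE₁ _ _)).mp ih1).mp ih2
  | nec _ ih => exact ih.nec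
  | ax hax =>
    rcases hax with hipc | ⟨A, B, rfl⟩ | ⟨A, rfl⟩
    · cases hipc with
      | k A B => exact mk_t (one_step (selfbox A) (ik4_ax (.k (boxT A) (boxT B))))
      | s A B C => exact mk_t (two_step (core_s (boxT A) (boxT B) (boxT C)))
      | andI A B => exact mk_t (one_step (selfbox A) (ik4_ax (.andI (boxT A) (boxT B))))
      | andE₁ A B => exact mk_t (ik4_ax (.andE₁ (boxT A) (boxT B)))
      | andE₂ A B => exact mk_t (ik4_ax (.andE₂ (boxT A) (boxT B)))
      | orI₁ A B => exact mk_t (ik4_ax (.orI₁ (boxT A) (boxT B)))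
      | orI₂ A B => exact mk_t (ik4_ax (.orI₂ (boxT A) (boxT B)))
      | orE A B C => exact mk_t (two_step (core_orE (boxT A) (boxT B) (boxT C)))
      | exfalso A => exact mk_t (ik4_ax (.exfalso (boxT A)))
    · exact mk_t (one_step (ik4_4 (tt (.imp (boxT A) (boxT B))))
        (impTrans (boxMono (ik4_ax (.andE₁ _ _))) (ik4_K (boxT A) (boxT B))))
    · exact mk_t (ik4_4 (boxT A))

end Form
namespace Form

/-- Apply the box translation to both components of each pair. -/
def mapB (X : List (Form × Form)) : List (Form × Form) := X.map fun d => (boxT d.1, boxT d.2)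

lemma conj1 : ∀ X : List (Form × Form),
    IK4 (.imp (boxT (conj (impsOf X))) (conj (impsOf (mapB X))))
  | [] => by
    show IK4 (.imp _ (.imp .bot .bot))
    apply HD.toIK4; apply HD.ded
    exact HD.idem .bot
  | d :: X => by
    show IK4 (.imp (.and (tt (.imp (boxT d.1) (boxT d.2))) (boxT (conj (impsOf X))))
      (.and (.imp (boxT d.1) (boxT d.2)) (conj (impsOf (mapB X)))))
    exact impAnd (ik4_ax (.andE₁ _ _)) (conj1 X)

lemma conj2_step {J R' Q : Form} (ih : IK4 (.imp (.and R' (.box R')) Q)) :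
    IK4 (.imp (.and (.and J R') (.box (.and J R'))) (.and (.and J (.box J)) Q)) := by
  apply HD.toIK4; apply HD.ded
  have h : HD [Form.and (.and J R') (.box (.and J R'))] (.and (.and J R') (.box (.and J R'))) :=
    .hyp (by simp)
  have hbJ : HD [Form.and (.and J R') (.box (.and J R'))] (.box J) :=
    (HD.thm (boxMono (ik4_ax (.andE₁ J R')))).mp h.e2
  have hbR : HD [Form.and (.and J R') (.box (.and J R'))] (.box R') :=
    (HD.thm (boxMono (ik4_ax (.andE₂ J R')))).mp h.e2
  exact HD.pair (HD.pair h.e1.e1 hbJ) ((HD.thm ih).mp (HD.pair h.e1.e2 hbR))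

lemma conj2 : ∀ X : List (Form × Form),
    IK4 (.imp (.and (conj (impsOf (mapB X))) (.box (conj (impsOf (mapB X)))))
      (boxT (conj (impsOf X))))
  | [] => ik4_id _
  | d :: X => by
    show IK4 (.imp (.and (.and (.imp (boxT d.1) (boxT d.2)) (conj (impsOf (mapB X))))
        (.box (.and (.imp (boxT d.1) (boxT d.2)) (conj (impsOf (mapB X))))))
      (.and (tt (.imp (boxT d.1) (boxT d.2))) (boxT (conj (impsOf X)))))
    exact conj2_step (conj2 X)

lemma brk_imp {P B' I : Form} (hB : IK4 (.imp P B')) :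
    IK4 (.imp (.and (.imp B' I) (.box I))
      (.and (.imp P (.and I (.box I))) (.box (.imp P (.and I (.box I)))))) := by
  apply HD.toIK4; apply HD.ded
  have h : HD [Form.and (.imp B' I) (.box I)] (.and (.imp B' I) (.box I)) := .hyp (by simp)
  have first : HD [Form.and (.imp B' I) (.box I)] (.imp P (.and I (.box I))) := by
    apply HD.ded
    have h2 : HD [P, Form.and (.imp B' I) (.box I)] (.and (.imp B' I) (.box I)) :=
      .hyp (by simp)
    have hp : HD [P, Form.and (.imp B' I) (.box I)] P := .hyp (by simp)
    exact HD.pair (h2.e1.mp ((HD.thm hB).mp hp)) h2.e2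
  have hbtI : HD [Form.and (.imp B' I) (.box I)] (.box (tt I)) :=
    ((HD.thm (boxPair I (.box I))).mp h.e2).mp ((HD.thm (ik4_4 I)).mp h.e2)
  exact HD.pair first ((HD.thm (boxMono (ik4_ax (.k (tt I) P)))).mp hbtI)

lemma brk {B B' : Form} (hB : IK4 (.imp (boxT B) B')) :
    ∀ E : Form, IK4 (.imp (bracket B' (boxT E)) (boxT (bracket B E)))
  | .atom n => by
    show IK4 (.imp (.and (.atom n) (.box (.atom n))) (.and (.atom n) (.box (.atom n))))
    exact ik4_id _
  | .bot => ik4_id _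
  | .box D => by
    show IK4 (.imp (.box (boxT D)) (.box (boxT D)))
    exact ik4_id _
  | .and E₁ E₂ => by
    show IK4 (.imp (.and (bracket B' (boxT E₁)) (bracket B' (boxT E₂)))
      (.and (boxT (bracket B E₁)) (boxT (bracket B E₂))))
    exact impAnd (brk hB E₁) (brk hB E₂)
  | .or E₁ E₂ => by
    show IK4 (.imp (.or (bracket B' (boxT E₁)) (bracket B' (boxT E₂)))
      (.or (boxT (bracket B E₁)) (boxT (bracket B E₂))))
    exact impOr (brk hB E₁) (brk hB E₂)
  | .imp E₁ E₂ => by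
    show IK4 (.imp (.and (.imp B' (.imp (boxT E₁) (boxT E₂))) (.box (.imp (boxT E₁) (boxT E₂))))
      (.and (.imp (boxT B) (.and (.imp (boxT E₁) (boxT E₂)) (.box (.imp (boxT E₁) (boxT E₂)))))
        (.box (.imp (boxT B) (.and (.imp (boxT E₁) (boxT E₂)) (.box (.imp (boxT E₁) (boxT E₂))))))))
    exact brk_imp hB

lemma brkDisj {B B' : Form} (hB : IK4 (.imp (boxT B) B')) :
    ∀ Z : List Form,
      IK4 (.imp (disj ((Z.map boxT).map (bracket B'))) (disj ((Z.map (bracket B)).map boxT)))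
  | [] => ik4_id _
  | E :: Z => by
    show IK4 (.imp (.or (bracket B' (boxT E)) (disj ((Z.map boxT).map (bracket B'))))
      (.or (boxT (bracket B E)) (disj ((Z.map (bracket B)).map boxT))))
    exact impOr (brk hB E) (brkDisj hB Z)

lemma boxT_disj : ∀ l : List Form, boxT (disj l) = disj (l.map boxT)
  | [] => rfl
  | a :: l => by
    show Form.or (boxT a) (boxT (disj l)) = Form.or (boxT a) (disj (l.map boxT))
    rw [boxT_disj l]

lemma left_gen (P P' C' : Form) (h1 : IK4 (.imp P P')) (h2 : IK4 (.imp (.and P' (.box P')) P)) :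
    IK4 (.imp (.and (.and (.imp P C') (.box (.imp P C'))) (.box P))
      (.and (.imp P' C') (.box P'))) := by
  apply HD.toIK4; apply HD.ded
  have h : HD [Form.and (.and (.imp P C') (.box (.imp P C'))) (.box P)]
      (.and (.and (.imp P C') (.box (.imp P C'))) (.box P)) := .hyp (by simp)
  have hbP' : HD [Form.and (.and (.imp P C') (.box (.imp P C'))) (.box P)] (.box P') :=
    (HD.thm (boxMono h1)).mp h.e2
  refine HD.pair ?_ hbP'
  apply HD.ded
  have h2' : HD [P', Form.and (.and (.imp P C') (.box (.imp P C'))) (.box P)]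
      (.and (.and (.imp P C') (.box (.imp P C'))) (.box P)) := .hyp (by simp)
  have hp' : HD [P', Form.and (.and (.imp P C') (.box (.imp P C'))) (.box P)] P' :=
    .hyp (by simp)
  have hbP'2 : HD [P', Form.and (.and (.imp P C') (.box (.imp P C'))) (.box P)] (.box P') :=
    (HD.thm (boxMono h1)).mp h2'.e2
  have hP : HD [P', Form.and (.and (.imp P C') (.box (.imp P C'))) (.box P)] P :=
    (HD.thm h2).mp (HD.pair hp' hbP'2)
  exact h2'.e1.e1.mp hP

lemma presAnd {X X' Y Y' : Form} (h1 : PresS X X') (h2 : PresS Y Y') :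
    PresS (.and X Y) (.and X' Y') :=
  .a3 (.a2 (.a1 (ik4_ax (.andE₁ X Y))) h1) (.a2 (.a1 (ik4_ax (.andE₂ X Y))) h2)

lemma b3box {p A B : Form} (hp : IsAtomOrBoxed p) (ih : PresS (boxT A) (boxT B)) :
    PresS (boxT (.imp p A)) (boxT (.imp p B)) := by
  have inner : PresS (.imp (boxT p) (boxT A)) (.imp (boxT p) (boxT B)) := by
    rcases hp with ⟨n, rfl⟩ | ⟨D, rfl⟩
    · have h1 : PresS (.imp (.box (.atom n)) (boxT A)) (.imp (.box (.atom n)) (boxT B)) :=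
        .b3 (Or.inr ⟨_, rfl⟩) ih
      have h2 : PresS (.imp (.atom n) (.imp (.box (.atom n)) (boxT A)))
          (.imp (.atom n) (.imp (.box (.atom n)) (boxT B))) := .b3 (Or.inl ⟨n, rfl⟩) h1
      exact .a2 (.a1 (curry (.atom n) (.box (.atom n)) (boxT A)))
        (.a2 h2 (.a1 (uncurry (.atom n) (.box (.atom n)) (boxT B))))
    · exact .b3 (Or.inr ⟨boxT D, rfl⟩) ih
  exact presAnd inner (.a4 inner)

lemma b2box (X : List (Form × Form)) (C : Form) :
    PresS (boxT (.and (.imp (conj (impsOf X)) C) (.box (conj (impsOf X)))))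
      (boxT (bracketList (conj (impsOf X)) (X.map Prod.fst ++ [C]))) := by
  have s1 : PresS (boxT (.and (.imp (conj (impsOf X)) C) (.box (conj (impsOf X)))))
      (.and (.imp (conj (impsOf (mapB X))) (boxT C)) (.box (conj (impsOf (mapB X))))) :=
    .a1 (left_gen (boxT (conj (impsOf X))) (conj (impsOf (mapB X))) (boxT C)
      (conj1 X) (conj2 X))
  have s2 := PresS.b2 (mapB X) (boxT C)
  have s3 : PresS (bracketList (conj (impsOf (mapB X))) ((mapB X).map Prod.fst ++ [boxT C]))
      (boxT (bracketList (conj (impsOf X)) (X.map Prod.fst ++ [C]))) := by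
    apply PresS.a1
    have heq : (mapB X).map Prod.fst ++ [boxT C] = ((X.map Prod.fst ++ [C]).map boxT) := by
      simp [mapB, List.map_map, Function.comp]
    rw [bracketList, bracketList, heq, boxT_disj]
    exact brkDisj (conj1 X) (X.map Prod.fst ++ [C])
  exact .a2 s1 (.a2 s2 s3)

end Form

/-- If A ▶* B then A^□ ▶* B^□. -/
theorem stmt4 (A B : Form) (h : Form.PresS A B) : Form.PresS (Form.boxT A) (Form.boxT B) := by
  induction h with
  | a1 h => exact .a1 ((Form.ik4_ax (.andE₁ _ _)).mp (Form.boxT_pres h))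
  | a2 _ _ ih1 ih2 => exact .a2 ih1 ih2
  | a3 _ _ ih1 ih2 => exact .a3 ih1 ih2
  | a4 _ ih => exact .a4 ih
  | b1 _ _ ih1 ih2 => exact .b1 ih1 ih2
  | b2 X C => exact Form.b2box X C
  | b3 hp _ ih => exact Form.b3box hp ih
end

section
/- For every subset X of {CP, CP_a, L}, the theory iK4 + X is closed under the box translation: for every modal proposition A, if iK4 + X ⊢ A then iK4 + X ⊢ A^□. -/
namespace Stmt5Aux

open Form

/-- Natural-deduction style derivation from hypotheses, over theory `Deriv Ax`. -/
inductive ND (Ax : Form → Prop) : List Form → Form → Prop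
  | hyp {Γ A} : A ∈ Γ → ND Ax Γ A
  | thm {Γ A} : Form.Deriv Ax A → ND Ax Γ A
  | mp {Γ A B} : ND Ax Γ (.imp A B) → ND Ax Γ A → ND Ax Γ B

variable {Ax : Form → Prop}

theorem dIpc (h4 : ∀ F, Form.K4Ax F → Ax F) {F : Form} (h : IpcAx F) : Deriv Ax F :=
  .ax (h4 _ (Or.inl h))

theorem dK (h4 : ∀ F, Form.K4Ax F → Ax F) (A B : Form) :
    Deriv Ax (.imp (.box (.imp A B)) (.imp (.box A) (.box B))) :=
  .ax (h4 _ (Or.inr (Or.inl ⟨A, B, rfl⟩)))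

theorem d4 (h4 : ∀ F, Form.K4Ax F → Ax F) (A : Form) :
    Deriv Ax (.imp (.box A) (.box (.box A))) :=
  .ax (h4 _ (Or.inr (Or.inr ⟨A, rfl⟩)))

theorem dId (h4 : ∀ F, Form.K4Ax F → Ax F) (A : Form) : Deriv Ax (.imp A A) :=
  .mp (.mp (dIpc h4 (.s A (.imp A A) A)) (dIpc h4 (.k A (.imp A A)))) (dIpc h4 (.k A A))

theorem ded (h4 : ∀ F, Form.K4Ax F → Ax F) {Γ : List Form} {A B : Form}
    (h : ND Ax (A :: Γ) B) : ND Ax Γ (.imp A B) := by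
  induction h with
  | @hyp C hm =>
      rcases List.mem_cons.mp hm with rfl | hm
      · exact .thm (dId h4 _)
      · exact .mp (.thm (dIpc h4 (.k C A))) (.hyp hm)
  | @thm C ht => exact .mp (.thm (dIpc h4 (.k C A))) (.thm ht)
  | @mp P Q _ _ ih1 ih2 => exact .mp (.mp (.thm (dIpc h4 (.s A P Q))) ih1) ih2

theorem ndClosed {B : Form} (h : ND Ax [] B) : Deriv Ax B := by
  induction h with
  | hyp hm => simp at hm
  | thm ht => exact ht
  | mp _ _ ih1 ih2 => exact .mp ih1 ih2

theorem dtrans (h4 : ∀ F, Form.K4Ax F → Ax F) {A B C : Form}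
    (h1 : Deriv Ax (.imp A B)) (h2 : Deriv Ax (.imp B C)) : Deriv Ax (.imp A C) :=
  ndClosed (ded h4 (.mp (.thm h2) (.mp (.thm h1) (.hyp (List.mem_cons_self)))))

theorem dAndI (h4 : ∀ F, Form.K4Ax F → Ax F) {A B : Form}
    (h1 : Deriv Ax A) (h2 : Deriv Ax B) : Deriv Ax (.and A B) :=
  .mp (.mp (dIpc h4 (.andI A B)) h1) h2

theorem boxMono (h4 : ∀ F, Form.K4Ax F → Ax F) {A B : Form} (h : Deriv Ax (.imp A B)) :
    Deriv Ax (.imp (.box A) (.box B)) :=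
  .mp (dK h4 A B) (.nec h)

theorem dBoxAnd (h4 : ∀ F, Form.K4Ax F → Ax F) (A B : Form) :
    Deriv Ax (.imp (.box A) (.imp (.box B) (.box (.and A B)))) :=
  dtrans h4 (boxMono h4 (dIpc h4 (.andI A B))) (dK h4 B (.and A B))

theorem dAndImp (h4 : ∀ F, Form.K4Ax F → Ax F) {P Q R : Form}
    (h1 : Deriv Ax (.imp P Q)) (h2 : Deriv Ax (.imp P R)) :
    Deriv Ax (.imp P (.and Q R)) := by
  apply ndClosed
  apply ded h4
  exact .mp (.mp (.thm (dIpc h4 (.andI Q R)))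
      (.mp (.thm h1) (.hyp (List.mem_cons_self))))
    (.mp (.thm h2) (.hyp (List.mem_cons_self)))

theorem tdi (h4 : ∀ F, Form.K4Ax F → Ax F) {P Q : Form}
    (hp : Deriv Ax (.imp P (.box P))) (h : Deriv Ax (.imp P Q)) :
    Deriv Ax (.imp P (.and Q (.box Q))) :=
  dAndImp h4 h (dtrans h4 hp (boxMono h4 h))

theorem dotboxComp (h4 : ∀ F, Form.K4Ax F → Ax F) (A : Form) :
    Deriv Ax (.imp (.and A (.box A)) (.box (.and A (.box A)))) := by
  apply ndClosed
  apply ded h4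
  have hb : ND Ax [Form.and A (.box A)] (.box A) :=
    .mp (.thm (dIpc h4 (.andE₂ A (.box A)))) (.hyp (List.mem_cons_self))
  exact .mp (.mp (.thm (dBoxAnd h4 A (.box A))) hb) (.mp (.thm (d4 h4 A)) hb)

theorem nAndE₁ (h4 : ∀ F, Form.K4Ax F → Ax F) {Γ : List Form} {A B : Form}
    (h : ND Ax Γ (.and A B)) : ND Ax Γ A :=
  .mp (.thm (dIpc h4 (.andE₁ A B))) h

theorem nAndE₂ (h4 : ∀ F, Form.K4Ax F → Ax F) {Γ : List Form} {A B : Form}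
    (h : ND Ax Γ (.and A B)) : ND Ax Γ B :=
  .mp (.thm (dIpc h4 (.andE₂ A B))) h

theorem nAndI (h4 : ∀ F, Form.K4Ax F → Ax F) {Γ : List Form} {A B : Form}
    (h1 : ND Ax Γ A) (h2 : ND Ax Γ B) : ND Ax Γ (.and A B) :=
  .mp (.mp (.thm (dIpc h4 (.andI A B))) h1) h2

theorem boxTComp (h4 : ∀ F, Form.K4Ax F → Ax F) (A : Form) :
    Deriv Ax (.imp (boxT A) (.box (boxT A))) := by
  induction A with
  | atom n => exact dotboxComp h4 (.atom n)
  | bot => exact dIpc h4 (.exfalso _)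
  | and A B ihA ihB =>
      show Deriv Ax (.imp (.and (boxT A) (boxT B)) (.box (.and (boxT A) (boxT B))))
      apply ndClosed
      apply ded h4
      have hX : ND Ax [Form.and (boxT A) (boxT B)] (.box (boxT A)) :=
        .mp (.thm ihA) (nAndE₁ h4 (.hyp (List.mem_cons_self)))
      have hY : ND Ax [Form.and (boxT A) (boxT B)] (.box (boxT B)) :=
        .mp (.thm ihB) (nAndE₂ h4 (.hyp (List.mem_cons_self)))
      exact .mp (.mp (.thm (dBoxAnd h4 _ _)) hX) hY
  | or A B ihA ihB =>
      show Deriv Ax (.imp (.or (boxT A) (boxT B)) (.box (.or (boxT A) (boxT B))))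
      exact .mp (.mp (dIpc h4 (.orE _ _ _))
          (dtrans h4 ihA (boxMono h4 (dIpc h4 (.orI₁ _ _)))))
        (dtrans h4 ihB (boxMono h4 (dIpc h4 (.orI₂ _ _))))
  | imp A B ihA ihB => exact dotboxComp h4 _
  | box A ih => exact d4 h4 _

theorem wrap (h4 : ∀ F, Form.K4Ax F → Ax F) {A B : Form}
    (h : Deriv Ax (.imp (boxT A) (boxT B))) : Deriv Ax (boxT (.imp A B)) :=
  dAndI h4 h (.nec h)

theorem boxAndImp (h4 : ∀ F, Form.K4Ax F → Ax F) {P Q R : Form}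
    (t : Deriv Ax (.imp (.and P Q) R)) :
    Deriv Ax (.imp (.box P) (.imp (.box Q) (.box R))) := by
  apply ndClosed
  apply ded h4; apply ded h4
  exact .mp (.thm (boxMono h4 t))
    (.mp (.mp (.thm (dBoxAnd h4 P Q)) (.hyp (by simp))) (.hyp (by simp)))

theorem impDistrib (h4 : ∀ F, Form.K4Ax F → Ax F) {A' U B' C' : Form}
    (hU : Deriv Ax (.imp U (.imp B' C'))) :
    Deriv Ax (.imp (.and (.imp A' U) (.box (.imp A' U)))
      (.imp (.and (.imp A' B') (.box (.imp A' B')))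
        (.and (.imp A' C') (.box (.imp A' C'))))) := by
  have t1 : Deriv Ax (.imp (.and (.imp A' U) (.imp A' B')) (.imp A' C')) := by
    apply ndClosed
    apply ded h4; apply ded h4
    have hp : ND Ax [A', .and (.imp A' U) (.imp A' B')]
        (.and (.imp A' U) (.imp A' B')) := .hyp (by simp)
    have ha : ND Ax [A', .and (.imp A' U) (.imp A' B')] A' := .hyp (by simp)
    exact .mp (.mp (.thm hU) (.mp (nAndE₁ h4 hp) ha)) (.mp (nAndE₂ h4 hp) ha)
  have M := boxAndImp h4 t1
  apply ndClosed
  apply ded h4; apply ded h4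
  have hx : ND Ax [.and (.imp A' B') (.box (.imp A' B')),
      .and (.imp A' U) (.box (.imp A' U))]
      (.and (.imp A' U) (.box (.imp A' U))) := .hyp (by simp)
  have hy : ND Ax [.and (.imp A' B') (.box (.imp A' B')),
      .and (.imp A' U) (.box (.imp A' U))]
      (.and (.imp A' B') (.box (.imp A' B'))) := .hyp (by simp)
  exact nAndI h4
    (.mp (.thm t1) (nAndI h4 (nAndE₁ h4 hx) (nAndE₁ h4 hy)))
    (.mp (.mp (.thm M) (nAndE₂ h4 hx)) (nAndE₂ h4 hy))

theorem orDistrib (h4 : ∀ F, Form.K4Ax F → Ax F) (A' B' C' : Form) :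
    Deriv Ax (.imp (.and (.imp A' C') (.box (.imp A' C')))
      (.imp (.and (.imp B' C') (.box (.imp B' C')))
        (.and (.imp (.or A' B') C') (.box (.imp (.or A' B') C'))))) := by
  have t2 : Deriv Ax (.imp (.and (.imp A' C') (.imp B' C')) (.imp (.or A' B') C')) := by
    apply ndClosed
    apply ded h4
    have hp : ND Ax [.and (.imp A' C') (.imp B' C')]
        (.and (.imp A' C') (.imp B' C')) := .hyp (by simp)
    exact .mp (.mp (.thm (dIpc h4 (.orE A' B' C'))) (nAndE₁ h4 hp)) (nAndE₂ h4 hp)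
  have M := boxAndImp h4 t2
  apply ndClosed
  apply ded h4; apply ded h4
  have hx : ND Ax [.and (.imp B' C') (.box (.imp B' C')),
      .and (.imp A' C') (.box (.imp A' C'))]
      (.and (.imp A' C') (.box (.imp A' C'))) := .hyp (by simp)
  have hy : ND Ax [.and (.imp B' C') (.box (.imp B' C')),
      .and (.imp A' C') (.box (.imp A' C'))]
      (.and (.imp B' C') (.box (.imp B' C'))) := .hyp (by simp)
  exact nAndI h4
    (.mp (.thm t2) (nAndI h4 (nAndE₁ h4 hx) (nAndE₁ h4 hy)))
    (.mp (.mp (.thm M) (nAndE₂ h4 hx)) (nAndE₂ h4 hy))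

end Stmt5Aux
/-- For every subset X of {CP, CP_a, L}, the theory iK4 + X is closed
under the box translation. -/
theorem stmt5 (X : Set (Form → Prop)) (hX : X ⊆ {Form.CPAx, Form.CPaAx, Form.LobAx}) (A : Form)
    (h : Form.Deriv (fun F => Form.K4Ax F ∨ ∃ S ∈ X, S F) A) :
    Form.Deriv (fun F => Form.K4Ax F ∨ ∃ S ∈ X, S F) (Form.boxT A) := by
  have h4 : ∀ F, Form.K4Ax F → (fun F => Form.K4Ax F ∨ ∃ S ∈ X, S F) F :=
    fun _ hF => Or.inl hF
  induction h with
  | @mp P Q _ _ ih1 ih2 =>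
      exact .mp (.mp (Stmt5Aux.dIpc h4
        (.andE₁ (.imp (Form.boxT P) (Form.boxT Q))
          (.box (.imp (Form.boxT P) (Form.boxT Q))))) ih1) ih2
  | nec _ ih => exact .nec ih
  | ax hF =>
      rcases hF with hk4 | ⟨S, hSX, hSF⟩
      · rcases hk4 with hipc | hK | hFour
        · cases hipc with
          | k A B =>
              exact Stmt5Aux.wrap h4 (Stmt5Aux.tdi h4 (Stmt5Aux.boxTComp h4 A)
                (Stmt5Aux.dIpc h4 (.k (Form.boxT A) (Form.boxT B))))
          | s A B C =>
              exact Stmt5Aux.wrap h4 (Stmt5Aux.tdi h4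
                (Stmt5Aux.boxTComp h4 (.imp A (.imp B C)))
                (Stmt5Aux.impDistrib h4
                  (Stmt5Aux.dIpc h4 (.andE₁ (.imp (Form.boxT B) (Form.boxT C))
                    (.box (.imp (Form.boxT B) (Form.boxT C)))))))
          | andI A B =>
              exact Stmt5Aux.wrap h4 (Stmt5Aux.tdi h4 (Stmt5Aux.boxTComp h4 A)
                (Stmt5Aux.dIpc h4 (.andI (Form.boxT A) (Form.boxT B))))
          | andE₁ A B =>
              exact Stmt5Aux.wrap h4 (Stmt5Aux.dIpc h4 (.andE₁ (Form.boxT A) (Form.boxT B)))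
          | andE₂ A B =>
              exact Stmt5Aux.wrap h4 (Stmt5Aux.dIpc h4 (.andE₂ (Form.boxT A) (Form.boxT B)))
          | orI₁ A B =>
              exact Stmt5Aux.wrap h4 (Stmt5Aux.dIpc h4 (.orI₁ (Form.boxT A) (Form.boxT B)))
          | orI₂ A B =>
              exact Stmt5Aux.wrap h4 (Stmt5Aux.dIpc h4 (.orI₂ (Form.boxT A) (Form.boxT B)))
          | orE A B C =>
              exact Stmt5Aux.wrap h4 (Stmt5Aux.tdi h4 (Stmt5Aux.boxTComp h4 (.imp A C))
                (Stmt5Aux.orDistrib h4 (Form.boxT A) (Form.boxT B) (Form.boxT C)))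
          | exfalso A =>
              exact Stmt5Aux.wrap h4 (Stmt5Aux.dIpc h4 (.exfalso (Form.boxT A)))
        · obtain ⟨A, B, rfl⟩ := hK
          exact Stmt5Aux.wrap h4 (Stmt5Aux.tdi h4 (Stmt5Aux.d4 h4 (Form.boxT (.imp A B)))
            (Stmt5Aux.dtrans h4
              (Stmt5Aux.boxMono h4 (Stmt5Aux.dIpc h4
                (.andE₁ (.imp (Form.boxT A) (Form.boxT B))
                  (.box (.imp (Form.boxT A) (Form.boxT B))))))
              (Stmt5Aux.dK h4 (Form.boxT A) (Form.boxT B))))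
        · obtain ⟨A, rfl⟩ := hFour
          exact Stmt5Aux.wrap h4 (Stmt5Aux.d4 h4 (Form.boxT A))
      · have hmem := hX hSX
        simp only [Set.mem_insert_iff, Set.mem_singleton_iff] at hmem
        rcases hmem with rfl | rfl | rfl
        · obtain ⟨C, rfl⟩ := hSF
          exact Stmt5Aux.wrap h4 (Stmt5Aux.boxTComp h4 C)
        · obtain ⟨n, rfl⟩ := hSF
          exact Stmt5Aux.wrap h4 (Stmt5Aux.boxTComp h4 (.atom n))
        · obtain ⟨C, rfl⟩ := hSF
          have lob : Form.Deriv (fun F => Form.K4Ax F ∨ ∃ S ∈ X, S F)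
              (.imp (.box (.imp (.box (Form.boxT C)) (Form.boxT C))) (.box (Form.boxT C))) :=
            .ax (Or.inr ⟨Form.LobAx, hSX, ⟨Form.boxT C, rfl⟩⟩)
          exact Stmt5Aux.wrap h4 (Stmt5Aux.dtrans h4
            (Stmt5Aux.boxMono h4 (Stmt5Aux.dIpc h4
              (.andE₁ (.imp (.box (Form.boxT C)) (Form.boxT C))
                (.box (.imp (.box (Form.boxT C)) (Form.boxT C))))))
            lob)
end

section
/- For every modal proposition A: (i) iGL ⊢ (□(□A→A)→□A)^□, and (ii) iK4 + CP ⊢ (A→□A)^□. -/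
section Aux

lemma dand {Ax : Form → Prop} (hIpc : ∀ F, Form.IpcAx F → Ax F) {A B : Form}
    (hA : Form.Deriv Ax A) (hB : Form.Deriv Ax B) : Form.Deriv Ax (.and A B) :=
  .mp (.mp (.ax (hIpc _ (.andI A B))) hA) hB

lemma dtrans {Ax : Form → Prop} (hIpc : ∀ F, Form.IpcAx F → Ax F) {A B C : Form}
    (h1 : Form.Deriv Ax (.imp A B)) (h2 : Form.Deriv Ax (.imp B C)) :
    Form.Deriv Ax (.imp A C) :=
  .mp (.mp (.ax (hIpc _ (.s A B C))) (.mp (.ax (hIpc _ (.k (.imp B C) A))) h2)) h1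

end Aux

/-- (i) iGL ⊢ (□(□A→A)→□A)^□, and (ii) iK4 + CP ⊢ (A→□A)^□. -/
theorem stmt8 (A : Form) :
    Form.IGL (Form.boxT (.imp (.box (.imp (.box A) A)) (.box A))) ∧
    Form.Deriv (fun F => Form.K4Ax F ∨ Form.CPAx F) (Form.boxT (.imp A (.box A))) := by
  constructor
  · -- iGL part
    set A' := Form.boxT A with hA'
    set C : Form := .imp (.box A') A' with hC
    have hIpc : ∀ F, Form.IpcAx F → Form.GLAx F := fun F h => Or.inl (Or.inl h)
    -- □(C ∧ □C) → □C
    have h1 : Form.Deriv Form.GLAx (.imp (.box (.and C (.box C))) (.box C)) :=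
      .mp (.ax (Or.inl (Or.inr (Or.inl ⟨_, _, rfl⟩))))
        (.nec (.ax (hIpc _ (.andE₁ C (.box C)))))
    -- Löb: □C → □A'
    have h2 : Form.Deriv Form.GLAx (.imp (.box C) (.box A')) :=
      .ax (Or.inr ⟨A', rfl⟩)
    have h3 : Form.Deriv Form.GLAx (.imp (.box (.and C (.box C))) (.box A')) :=
      dtrans hIpc h1 h2
    show Form.Deriv Form.GLAx
      (.and (.imp (.box (.and C (.box C))) (.box A'))
            (.box (.imp (.box (.and C (.box C))) (.box A'))))
    exact dand hIpc h3 (.nec h3)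
  · -- iK4 + CP part
    set A' := Form.boxT A with hA'
    have hIpc : ∀ F, Form.IpcAx F → (Form.K4Ax F ∨ Form.CPAx F) :=
      fun F h => Or.inl (Or.inl h)
    have hcp : Form.Deriv (fun F => Form.K4Ax F ∨ Form.CPAx F) (.imp A' (.box A')) :=
      .ax (Or.inr ⟨A', rfl⟩)
    exact dand hIpc hcp (.nec hcp)
end

section
/- Let Γ be any set of modal propositions, and let ⊢_Γ denote derivability from Γ and the axioms of IPC_□ by modus ponens. For any modal propositions A, A′ and B, if ⊢_Γ A ↔ A′ then ⊢_Γ [A]B ↔ [A′]B. -/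
namespace Form

theorem DerivMP.mono {Ax Ax' : Form → Prop} (h : ∀ F, Ax F → Ax' F) {A : Form} :
    DerivMP Ax A → DerivMP Ax' A := by
  intro d
  induction d with
  | ax ha => exact .ax (h _ ha)
  | mp _ _ ih1 ih2 => exact .mp ih1 ih2

section
variable {Ax : Form → Prop} (hIpc : ∀ F, IpcAx F → Ax F)
include hIpc

theorem derivId (A : Form) : DerivMP Ax (.imp A A) :=
  .mp (.mp (.ax (hIpc _ (.s A (.imp A A) A))) (.ax (hIpc _ (.k A (.imp A A)))))
    (.ax (hIpc _ (.k A A)))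

theorem ded {A B : Form} (d : DerivMP (fun F => Ax F ∨ F = A) B) :
    DerivMP Ax (.imp A B) := by
  induction d with
  | @ax C hc =>
    rcases hc with hc | rfl
    · exact .mp (.ax (hIpc _ (.k C A))) (.ax hc)
    · exact derivId hIpc _
  | @mp X Y _ _ ih1 ih2 =>
    exact .mp (.mp (.ax (hIpc _ (.s A X Y))) ih1) ih2

omit hIpc in
theorem wk {A B : Form} (d : DerivMP Ax B) : DerivMP (fun F => Ax F ∨ F = A) B :=
  d.mono (fun _ h => Or.inl h)

omit hIpc in
theorem hyp (A : Form) : DerivMP (fun F => Ax F ∨ F = A) A := .ax (Or.inr rfl)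

theorem biimpI {X Y : Form} (h1 : DerivMP Ax (.imp X Y)) (h2 : DerivMP Ax (.imp Y X)) :
    DerivMP Ax (biimp X Y) :=
  .mp (.mp (.ax (hIpc _ (.andI _ _))) h1) h2

theorem biimpE1 {X Y : Form} (h : DerivMP Ax (biimp X Y)) : DerivMP Ax (.imp X Y) :=
  .mp (.ax (hIpc _ (.andE₁ _ _))) h

theorem biimpE2 {X Y : Form} (h : DerivMP Ax (biimp X Y)) : DerivMP Ax (.imp Y X) :=
  .mp (.ax (hIpc _ (.andE₂ _ _))) h

/-- From X→X' and Y→Y' derive X∧Y → X'∧Y'. -/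
theorem andMono {X X' Y Y' : Form} (h1 : DerivMP Ax (.imp X X'))
    (h2 : DerivMP Ax (.imp Y Y')) : DerivMP Ax (.imp (.and X Y) (.and X' Y')) := by
  apply ded hIpc
  have hIpc' : ∀ F, IpcAx F → (Ax F ∨ F = Form.and X Y) := fun F hf => Or.inl (hIpc F hf)
  have hx : DerivMP (fun F => Ax F ∨ F = Form.and X Y) X :=
    .mp (.ax (hIpc' _ (.andE₁ X Y))) (hyp _)
  have hy : DerivMP (fun F => Ax F ∨ F = Form.and X Y) Y :=
    .mp (.ax (hIpc' _ (.andE₂ X Y))) (hyp _)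
  exact .mp (.mp (.ax (hIpc' _ (.andI X' Y'))) (.mp (wk h1) hx)) (.mp (wk h2) hy)

theorem orMono {X X' Y Y' : Form} (h1 : DerivMP Ax (.imp X X'))
    (h2 : DerivMP Ax (.imp Y Y')) : DerivMP Ax (.imp (.or X Y) (.or X' Y')) := by
  have l1 : DerivMP Ax (.imp X (.or X' Y')) := by
    apply ded hIpc
    exact .mp (.ax (Or.inl (hIpc _ (.orI₁ X' Y')))) (.mp (wk h1) (hyp _))
  have l2 : DerivMP Ax (.imp Y (.or X' Y')) := by
    apply ded hIpc
    exact .mp (.ax (Or.inl (hIpc _ (.orI₂ X' Y')))) (.mp (wk h2) (hyp _))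
  exact .mp (.mp (.ax (hIpc _ (.orE X Y (.or X' Y')))) l1) l2

/-- From A'→A derive (A→C) → (A'→C). -/
theorem impAnte {A A' C : Form} (h : DerivMP Ax (.imp A' A)) :
    DerivMP Ax (.imp (.imp A C) (.imp A' C)) := by
  apply ded hIpc
  apply ded (fun F hf => Or.inl (hIpc F hf))
  exact .mp (wk (hyp (.imp A C))) (.mp (wk (wk h)) (hyp A'))

end

end Form

/-- For any set Γ of modal propositions, with ⊢_Γ derivability from Γ
and the IPC_□ axioms by modus ponens: if ⊢_Γ A ↔ A′ then ⊢_Γ [A]B ↔ [A′]B. -/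
theorem stmt10 (Γ : Set Form) (A A' B : Form)
    (h : Form.DerivMP (fun F => Form.IpcAx F ∨ F ∈ Γ) (Form.biimp A A')) :
    Form.DerivMP (fun F => Form.IpcAx F ∨ F ∈ Γ)
      (Form.biimp (Form.bracket A B) (Form.bracket A' B)) := by
  open Form in
  set Ax : Form → Prop := fun F => Form.IpcAx F ∨ F ∈ Γ with hAx
  have hIpc : ∀ F, Form.IpcAx F → Ax F := fun F hf => Or.inl hf
  induction B with
  | atom n => exact Form.biimpI hIpc (Form.derivId hIpc _) (Form.derivId hIpc _)
  | bot => exact Form.biimpI hIpc (Form.derivId hIpc _) (Form.derivId hIpc _)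
  | box C _ => exact Form.biimpI hIpc (Form.derivId hIpc _) (Form.derivId hIpc _)
  | and C D ihC ihD =>
    exact Form.biimpI hIpc
      (Form.andMono hIpc (Form.biimpE1 hIpc ihC) (Form.biimpE1 hIpc ihD))
      (Form.andMono hIpc (Form.biimpE2 hIpc ihC) (Form.biimpE2 hIpc ihD))
  | or C D ihC ihD =>
    exact Form.biimpI hIpc
      (Form.orMono hIpc (Form.biimpE1 hIpc ihC) (Form.biimpE1 hIpc ihD))
      (Form.orMono hIpc (Form.biimpE2 hIpc ihC) (Form.biimpE2 hIpc ihD))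
  | imp C D _ _ =>
    exact Form.biimpI hIpc
      (Form.impAnte hIpc (Form.biimpE2 hIpc h))
      (Form.impAnte hIpc (Form.biimpE1 hIpc h))
end

section
/- Let X be a finite set of implications, B = ⋀X, C a modal proposition, and Z = {E : (E→F) ∈ X} ∪ {C}. Then for each E ∈ Z, iK4 ⊢ (⋀{(B↓D)→C : D∈X} ∧ [B]E) → (B→C); consequently iK4 ⊢ (⋀{(B↓D)→C : D∈X} ∧ [B]Z) → (B→C). -/
namespace Form

/-! ### Auxiliary Hilbert-system toolkit -/

/-- Derivability in IPC_□ from a list of hypotheses. -/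
abbrev DH (Γ : List Form) (A : Form) : Prop :=
  DerivMP (fun F => IpcAx F ∨ F ∈ Γ) A

namespace DH

lemma ipc {Γ : List Form} {A : Form} (h : IpcAx A) : DH Γ A := DerivMP.ax (Or.inl h)

lemma hyp {Γ : List Form} {A : Form} (h : A ∈ Γ) : DH Γ A := DerivMP.ax (Or.inr h)

lemma imp_id (Γ : List Form) (A : Form) : DH Γ (A.imp A) :=
  ((ipc (IpcAx.s A (A.imp A) A)).mp (ipc (IpcAx.k A (A.imp A)))).mp (ipc (IpcAx.k A A))

lemma weaken {Γ Γ' : List Form} (hs : ∀ F ∈ Γ, F ∈ Γ') {A : Form} (h : DH Γ A) :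
    DH Γ' A := by
  induction h with
  | ax h =>
    rcases h with h | h
    · exact ipc h
    · exact hyp (hs _ h)
  | mp _ _ ih1 ih2 => exact ih1.mp ih2

lemma deduction {Γ : List Form} {A B : Form} (h : DH (A :: Γ) B) : DH Γ (A.imp B) := by
  induction h with
  | ax h =>
    rcases h with h | h
    · exact (ipc (IpcAx.k _ A)).mp (ipc h)
    · rcases List.mem_cons.mp h with rfl | h
      · exact imp_id ..
      · exact (ipc (IpcAx.k _ A)).mp (hyp h)
  | mp _ _ ih1 ih2 => exact ((ipc (IpcAx.s ..)).mp ih1).mp ih2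

lemma andE1 {Γ : List Form} {A B : Form} (h : DH Γ (.and A B)) : DH Γ A :=
  (ipc (IpcAx.andE₁ A B)).mp h

lemma andE2 {Γ : List Form} {A B : Form} (h : DH Γ (.and A B)) : DH Γ B :=
  (ipc (IpcAx.andE₂ A B)).mp h

lemma andI {Γ : List Form} {A B : Form} (h1 : DH Γ A) (h2 : DH Γ B) : DH Γ (.and A B) :=
  ((ipc (IpcAx.andI A B)).mp h1).mp h2

lemma imp_trans {Γ : List Form} {A B C : Form} (h1 : DH Γ (A.imp B)) (h2 : DH Γ (B.imp C)) :
    DH Γ (A.imp C) :=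
  deduction ((weaken (fun _ h => List.mem_cons_of_mem _ h) h2).mp
    ((weaken (fun _ h => List.mem_cons_of_mem _ h) h1).mp (hyp (List.mem_cons_self))))

lemma dtop {Γ : List Form} : DH Γ top := imp_id Γ .bot

lemma conj_elim {Γ : List Form} {l : List Form} (h : DH Γ (conj l)) {F : Form}
    (hF : F ∈ l) : DH Γ F := by
  induction l with
  | nil => cases hF
  | cons G l ih =>
    rcases List.mem_cons.mp hF with rfl | hF
    · exact andE1 h
    · exact ih (andE2 h) hF

lemma conj_intro {Γ : List Form} {l : List Form} (h : ∀ F ∈ l, DH Γ F) : DH Γ (conj l) := by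
  induction l with
  | nil => exact dtop
  | cons G l ih =>
    exact andI (h G (List.mem_cons_self)) (ih fun F hF => h F (List.mem_cons_of_mem _ hF))

lemma disj_imp {Γ : List Form} {l : List Form} {G : Form}
    (h : ∀ F ∈ l, DH Γ (F.imp G)) : DH Γ ((disj l).imp G) := by
  induction l with
  | nil => exact ipc (IpcAx.exfalso G)
  | cons F l ih =>
    exact ((ipc (IpcAx.orE F (disj l) G)).mp (h F (List.mem_cons_self))).mp
      (ih fun F hF => h F (List.mem_cons_of_mem _ hF))

lemma bracket_elim (A : Form) {Γ : List Form} (hA : A ∈ Γ) :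
    ∀ E : Form, DH Γ ((bracket A E).imp E)
  | .atom n => imp_id ..
  | .bot => imp_id ..
  | .box B => imp_id ..
  | .and B C => by
    have wB : DH (Form.and (bracket A B) (bracket A C) :: Γ) ((bracket A B).imp B) :=
      weaken (fun _ h => List.mem_cons_of_mem _ h) (bracket_elim A hA B)
    have wC : DH (Form.and (bracket A B) (bracket A C) :: Γ) ((bracket A C).imp C) :=
      weaken (fun _ h => List.mem_cons_of_mem _ h) (bracket_elim A hA C)
    have hh : DH (Form.and (bracket A B) (bracket A C) :: Γ)
        (.and (bracket A B) (bracket A C)) := hyp (List.mem_cons_self)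
    exact deduction (andI (wB.mp (andE1 hh)) (wC.mp (andE2 hh)))
  | .or B C => by
    have fB : DH Γ ((bracket A B).imp (.or B C)) :=
      imp_trans (bracket_elim A hA B) (ipc (IpcAx.orI₁ B C))
    have fC : DH Γ ((bracket A C).imp (.or B C)) :=
      imp_trans (bracket_elim A hA C) (ipc (IpcAx.orI₂ B C))
    exact ((ipc (IpcAx.orE (bracket A B) (bracket A C) (.or B C))).mp fB).mp fC
  | .imp B C => by
    apply deduction
    exact DerivMP.mp (hyp (List.mem_cons_self))
      (hyp (List.mem_cons_of_mem _ hA))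

end DH

lemma DH_to_IK4 {A : Form} (h : DH [] A) : IK4 A := by
  induction h with
  | ax h =>
    rcases h with h | h
    · exact Deriv.ax (Or.inl h)
    · cases h
  | mp _ _ ih1 ih2 => exact ih1.mp ih2

lemma stmt13_part1 (X : List (Form × Form)) (C E : Form)
    (hE : E ∈ X.map Prod.fst ++ [C]) :
    DH []
      (.imp (.and (conj (X.map fun D => .imp (bdown X D) C)) (bracket (conj (impsOf X)) E))
        (.imp (conj (impsOf X)) C)) := by
  apply DH.deduction
  apply DH.deduction
  set B := conj (impsOf X) with hBdef
  set H := conj (X.map fun D => .imp (bdown X D) C) with hHdef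
  have hB : DH [B, .and H (bracket B E)] B := DH.hyp (List.mem_cons_self)
  have hHE : DH [B, .and H (bracket B E)] (.and H (bracket B E)) :=
    DH.hyp (List.mem_cons_of_mem _ (List.mem_cons_self))
  have hH := DH.andE1 hHE
  have hbr := DH.andE2 hHE
  have hEv : DH [B, .and H (bracket B E)] E :=
    (DH.bracket_elim B (List.mem_cons_self) E).mp hbr
  rcases List.mem_append.mp hE with hmem | hmem
  · obtain ⟨D, hD, rfl⟩ := List.mem_map.mp hmem
    have hDimp : DH [B, .and H (bracket B D.1)] (.imp D.1 D.2) :=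
      DH.conj_elim hB (List.mem_map_of_mem (f := fun D => Form.imp D.1 D.2) hD)
    have hF : DH [B, .and H (bracket B D.1)] D.2 := hDimp.mp hEv
    have hbd : DH [B, .and H (bracket B D.1)] (bdown X D) := by
      apply DH.conj_intro
      intro F hF'
      rcases List.mem_append.mp hF' with h | h
      · obtain ⟨P, hP, rfl⟩ := List.mem_map.mp h
        exact DH.conj_elim hB (List.mem_map_of_mem (f := fun D => Form.imp D.1 D.2) (List.mem_of_mem_erase hP))
      · rcases List.mem_singleton.mp h with rfl
        exact hF
    have hHC : DH [B, .and H (bracket B D.1)] (.imp (bdown X D) C) :=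
      DH.conj_elim hH (List.mem_map.mpr ⟨D, hD, rfl⟩)
    exact hHC.mp hbd
  · rcases List.mem_singleton.mp hmem with rfl
    exact hEv

end Form

/-- Let X be a finite set of implications, B = ⋀X, C a modal
proposition, Z = {E : (E→F)∈X} ∪ {C}. Then for each E ∈ Z,
iK4 ⊢ (⋀{(B↓D)→C : D∈X} ∧ [B]E) → (B→C), and consequently
iK4 ⊢ (⋀{(B↓D)→C : D∈X} ∧ [B]Z) → (B→C). -/
theorem stmt13 (X : List (Form × Form)) (C : Form) :
    (∀ E ∈ X.map Prod.fst ++ [C],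
      Form.IK4 (.imp
        (.and (Form.conj (X.map fun D => .imp (Form.bdown X D) C))
          (Form.bracket (Form.conj (Form.impsOf X)) E))
        (.imp (Form.conj (Form.impsOf X)) C))) ∧
    Form.IK4 (.imp
      (.and (Form.conj (X.map fun D => .imp (Form.bdown X D) C))
        (Form.bracketList (Form.conj (Form.impsOf X)) (X.map Prod.fst ++ [C])))
      (.imp (Form.conj (Form.impsOf X)) C)) := by
  constructor
  · intro E hE
    exact Form.DH_to_IK4 (Form.stmt13_part1 X C E hE)
  · apply Form.DH_to_IK4
    apply Form.DH.deduction
    set B := Form.conj (Form.impsOf X) with hBdef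
    set H := Form.conj (X.map fun D => .imp (Form.bdown X D) C) with hHdef
    set Z := X.map Prod.fst ++ [C] with hZdef
    have hHZ : Form.DH [.and H (Form.bracketList B Z)] (.and H (Form.bracketList B Z)) :=
      Form.DH.hyp (List.mem_cons_self)
    have hH := Form.DH.andE1 hHZ
    have hZv := Form.DH.andE2 hHZ
    have hd : Form.DH [.and H (Form.bracketList B Z)]
        ((Form.disj (Z.map (Form.bracket B))).imp (.imp B C)) := by
      apply Form.DH.disj_imp
      intro G hG
      obtain ⟨E, hE, rfl⟩ := List.mem_map.mp hG
      apply Form.DH.deduction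
      have p1 := Form.DH.weaken (Γ' := Form.bracket B E :: [.and H (Form.bracketList B Z)])
        (fun _ h => by cases h) (Form.stmt13_part1 X C E hE)
      exact p1.mp (Form.DH.andI
        (Form.DH.weaken (fun _ h => List.mem_cons_of_mem _ h) hH)
        (Form.DH.hyp (List.mem_cons_self)))
    exact hd.mp hZv
end

section
/- iGLC does not prove ¬¬p → (□¬p → p), for an atomic proposition p. -/
/-- Heyting implication on the 3-element chain. -/
def himp3 (a b : Fin 3) : Fin 3 := if a ≤ b then 2 else b

/-- Evaluation of formulas in the 3-element Heyting algebra with □ := ⊤,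
all atoms evaluated to the middle element. -/
def ev : Form → Fin 3
  | .atom _ => 1
  | .bot => 0
  | .and A B => min (ev A) (ev B)
  | .or A B => max (ev A) (ev B)
  | .imp A B => himp3 (ev A) (ev B)
  | .box _ => 2

lemma ev_sound {A : Form} (h : Form.IGLC A) : ev A = 2 := by
  induction h with
  | ax h =>
    rcases h with (((hipc | hk | h4) | hlob) | hcp)
    · cases hipc <;> simp only [ev] <;>
        first
        | exact (by decide : ∀ a b : Fin 3, himp3 a (himp3 b a) = 2) _ _
        | exact (by decide : ∀ a b c : Fin 3,
            himp3 (himp3 a (himp3 b c)) (himp3 (himp3 a b) (himp3 a c)) = 2) _ _ _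
        | exact (by decide : ∀ a b : Fin 3, himp3 a (himp3 b (min a b)) = 2) _ _
        | exact (by decide : ∀ a b : Fin 3, himp3 (min a b) a = 2) _ _
        | exact (by decide : ∀ a b : Fin 3, himp3 (min a b) b = 2) _ _
        | exact (by decide : ∀ a b : Fin 3, himp3 a (max a b) = 2) _ _
        | exact (by decide : ∀ a b : Fin 3, himp3 b (max a b) = 2) _ _
        | exact (by decide : ∀ a b c : Fin 3,
            himp3 (himp3 a c) (himp3 (himp3 b c) (himp3 (max a b) c)) = 2) _ _ _
        | exact (by decide : ∀ a : Fin 3, himp3 0 a = 2) _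
    · obtain ⟨A, B, rfl⟩ := hk; rfl
    · obtain ⟨A, rfl⟩ := h4; rfl
    · obtain ⟨A, rfl⟩ := hlob; rfl
    · obtain ⟨A, rfl⟩ := hcp
      simp only [ev]
      exact (by decide : ∀ a : Fin 3, himp3 a 2 = 2) _
  | mp h1 h2 ih1 ih2 =>
    simp only [ev, ih2] at ih1
    exact (by decide : ∀ b : Fin 3, himp3 2 b = 2 → b = 2) _ ih1
  | nec h ih => rfl

/-- iGLC does not prove ¬¬p → (□¬p → p) for an atomic proposition p. -/
theorem stmt14 (n : ℕ) :
    ¬ Form.IGLC (.imp (.imp (.imp (.atom n) .bot) .bot)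
        (.imp (.box (.imp (.atom n) .bot)) (.atom n))) := by
  intro h
  have := ev_sound h
  simp only [ev] at this
  revert this
  decide
end

section
/- For every modal proposition A, iGLC ⊢ A if and only if A is derivable by modus ponens alone (without the necessitation rule) from the axioms of iGL together with all instances of CP; that is, in the presence of CP and modus ponens, the necessitation rule is superfluous. -/
/-- iGLC ⊢ A iff A is derivable by modus ponens alone from the axioms
of iGL (closed under boxing) together with all instances of CP. -/
theorem stmt15 (A : Form) :
    Form.IGLC A ↔ Form.DerivMP (fun F => Form.GLAxBox F ∨ Form.CPAx F) A := by
  constructor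
  · intro h
    induction h with
    | ax h =>
      rcases h with h | h
      · exact .ax (Or.inl (.base h))
      · exact .ax (Or.inr h)
    | mp _ _ ih1 ih2 => exact .mp ih1 ih2
    | nec _ ih => exact .mp (.ax (Or.inr ⟨_, rfl⟩)) ih
  · intro h
    induction h with
    | ax h =>
      rcases h with h | h
      · induction h with
        | base g => exact .ax (Or.inl g)
        | box _ ih => exact .nec ih
      · exact .ax (Or.inr h)
    | mp _ _ ih1 ih2 => exact .mp ih1 ih2
end
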